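/- arXiv:2206.07801 — 5 statements merged into one kernel-verified Lean document; each statement's English description precedes it below -/
import Mathlib

section
/- Let f satisfy Assumption (f) and have finite right limit at 0 (extend f(0) := lim_{t→0⁺} f(t)), let p ∈ Δ_C⁺, a ∈ ℝ^C, and ξ > 0. Then min_{v ∈ ℝ^C} [ D_f^conj(v, p) + ξ‖v‖₂² + aᵀv ] = − sup_{θ ∈ ℝ} [ −θ + Σ_{c=1}^C min_{q_c ≥ 0} ( p_c f(q_c/p_c) + (a_c + q_c)²/(4ξ) + θ q_c ) ], where the outer minimum on the left-hand side and each inner minimum over q_c ≥ 0 on the right-hand side are attained. -/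
open Set Filter

section Aux
variable {f f' f'' : ℝ → ℝ}
variable (hf_deriv : ∀ t ∈ Set.Ioi (0 : ℝ), HasDerivAt f (f' t) t)
variable (hf_deriv2 : ∀ t ∈ Set.Ioi (0 : ℝ), HasDerivAt f' (f'' t) t)
variable (hf''_pos : ∀ t ∈ Set.Ioi (0 : ℝ), 0 < f'' t)
variable (hf_one : f 1 = 0)
variable (hf_zero : Filter.Tendsto f (nhdsWithin 0 (Set.Ioi 0)) (nhds (f 0)))

include hf_deriv2 hf''_pos in
lemma f'_mono : StrictMonoOn f' (Set.Ioi 0) := by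
  apply strictMonoOn_of_deriv_pos (convex_Ioi 0)
  · exact fun t ht => (hf_deriv2 t ht).continuousAt.continuousWithinAt
  · intro t ht
    rw [interior_Ioi] at ht
    rw [(hf_deriv2 t ht).deriv]; exact hf''_pos t ht

include hf_deriv hf_zero in
lemma f_contIci : ContinuousOn f (Set.Ici 0) := by
  intro t ht
  rcases eq_or_lt_of_le (Set.mem_Ici.mp ht : (0:ℝ) ≤ t) with h0 | h0
  · subst h0
    rw [ContinuousWithinAt, show Set.Ici (0:ℝ) = insert 0 (Set.Ioi 0) from Set.Ioi_insert.symm,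
      nhdsWithin_insert]
    exact Filter.Tendsto.sup (tendsto_pure_nhds f 0) hf_zero
  · exact ((hf_deriv t h0).continuousAt).continuousWithinAt

include hf_deriv hf_deriv2 hf''_pos hf_zero in
lemma tangent : ∀ s ∈ Set.Ioi (0:ℝ), ∀ t ∈ Set.Ici (0:ℝ),
    f s + f' s * (t - s) ≤ f t := by
  have hmono := f'_mono hf_deriv2 hf''_pos
  have key : ∀ s ∈ Set.Ioi (0:ℝ), ∀ t ∈ Set.Ioi (0:ℝ),
      f s + f' s * (t - s) ≤ f t := by
    intro s hs t ht
    rcases lt_trichotomy s t with h | h | h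
    · obtain ⟨u, hu, hu'⟩ := exists_hasDerivAt_eq_slope f f' h
        (fun x hx => ((hf_deriv x (lt_of_lt_of_le hs hx.1)).continuousAt).continuousWithinAt)
        (fun x hx => hf_deriv x (lt_trans hs hx.1))
      have : f' s < f' u := hmono hs (lt_trans hs hu.1) hu.1
      have hst : (0:ℝ) < t - s := by linarith
      rw [eq_div_iff (by linarith)] at hu'
      nlinarith
    · subst h; simp
    · obtain ⟨u, hu, hu'⟩ := exists_hasDerivAt_eq_slope f f' h
        (fun x hx => ((hf_deriv x (lt_of_lt_of_le ht hx.1)).continuousAt).continuousWithinAt)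
        (fun x hx => hf_deriv x (lt_trans ht hx.1))
      have : f' u < f' s := hmono (lt_trans ht hu.1) hs hu.2
      have hst : (0:ℝ) < s - t := by linarith
      rw [eq_div_iff (by linarith)] at hu'
      nlinarith
  intro s hs t ht
  rcases eq_or_lt_of_le (Set.mem_Ici.mp ht : (0:ℝ) ≤ t) with h0 | h0
  · subst h0
    have hlim : Tendsto (fun t => f s + f' s * (t - s)) (nhdsWithin 0 (Set.Ioi 0))
        (nhds (f s + f' s * (0 - s))) := by
      apply Tendsto.mono_left _ nhdsWithin_le_nhds
      exact (tendsto_const_nhds.add (tendsto_const_nhds.mul ((Filter.tendsto_id).sub tendsto_const_nhds)))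
    refine le_of_tendsto_of_tendsto hlim hf_zero ?_
    filter_upwards [self_mem_nhdsWithin] with t ht'
    exact key s hs t ht'
  · exact key s hs t h0

set_option linter.unusedSectionVars false in
include hf_deriv hf_deriv2 hf''_pos hf_one hf_zero in
lemma inner_min (pc ac θ ξ : ℝ) (hpc : 0 < pc) (hξ : 0 < ξ) :
    ∃ q : ℝ, 0 ≤ q ∧
      (∀ q' : ℝ, 0 ≤ q' →
        pc * f (q / pc) + (ac + q) ^ 2 / (4 * ξ) + θ * q ≤
          pc * f (q' / pc) + (ac + q') ^ 2 / (4 * ξ) + θ * q') ∧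
      sInf ((fun q' => pc * f (q' / pc) + (ac + q') ^ 2 / (4 * ξ) + θ * q') '' Set.Ici 0)
        = pc * f (q / pc) + (ac + q) ^ 2 / (4 * ξ) + θ * q := by
  have hcont : ContinuousOn f (Set.Ici 0) := f_contIci hf_deriv hf_zero
  have htan := tangent hf_deriv hf_deriv2 hf''_pos hf_zero
  set g : ℝ → ℝ := fun q => pc * f (q / pc) + (ac + q) ^ 2 / (4 * ξ) + θ * q with hg
  have hgcont : ContinuousOn g (Set.Ici 0) := by
    apply ContinuousOn.add
    apply ContinuousOn.add
    · exact continuousOn_const.mul (hcont.comp (continuousOn_id.div_const pc)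
        (fun q hq => div_nonneg hq hpc.le))
    · fun_prop
    · fun_prop
  have hlb : ∀ q ∈ Set.Ici (0:ℝ), f' 1 * (q - pc) + (ac + q) ^ 2 / (4 * ξ) + θ * q ≤ g q := by
    intro q hq
    have := htan 1 (by norm_num) (q / pc) (div_nonneg hq hpc.le)
    rw [hf_one] at this
    have h2 : f' 1 * (q - pc) ≤ pc * f (q / pc) := by
      have := mul_le_mul_of_nonneg_left this hpc.le
      calc f' 1 * (q - pc) = pc * (0 + f' 1 * (q / pc - 1)) := by
            field_simp; ring
        _ ≤ pc * f (q / pc) := this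
    simp only [hg]; linarith
  set h : ℝ → ℝ := fun q => f' 1 * (q - pc) + (ac + q) ^ 2 / (4 * ξ) + θ * q with hh
  have hhtop : Tendsto h atTop atTop := by
    have h1 : Tendsto (fun q : ℝ => q / (4*ξ) + (f' 1 + θ + ac / (2*ξ))) atTop atTop := by
      apply tendsto_atTop_add_const_right
      exact (tendsto_id.atTop_div_const (by positivity))
    have h2 : Tendsto (fun q : ℝ => q * (q / (4*ξ) + (f' 1 + θ + ac / (2*ξ)))
        + (ac^2/(4*ξ) - f' 1 * pc)) atTop atTop := by
      apply tendsto_atTop_add_const_right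
      exact Filter.Tendsto.atTop_mul_atTop₀ tendsto_id h1
    convert h2 using 2 with q
    simp only [hh]; field_simp; ring
  obtain ⟨R, hR⟩ := (hhtop.eventually (eventually_ge_atTop (g 0 + 1))).exists_forall_of_atTop
  set R' := max R 0 with hR'
  obtain ⟨q0, hq0mem, hq0min⟩ := (isCompact_Icc (a := (0:ℝ)) (b := R')).exists_isMinOn
    ⟨0, by simp [hR', le_max_right]⟩ (hgcont.mono (fun x hx => hx.1))
  refine ⟨q0, hq0mem.1, ?_, ?_⟩
  · intro q' hq'
    rcases le_or_gt q' R' with hle | hlt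
    · exact hq0min ⟨hq', hle⟩
    · have h1 : g 0 + 1 ≤ h q' := hR q' (le_trans (le_max_left R 0) hlt.le)
      have h2 : h q' ≤ g q' := hlb q' hq'
      have h3 : g q0 ≤ g 0 := hq0min ⟨le_refl 0, le_max_right R 0⟩
      show g q0 ≤ g q'
      linarith
  · apply IsLeast.csInf_eq
    constructor
    · exact ⟨q0, hq0mem.1, rfl⟩
    · rintro x ⟨q', hq', rfl⟩
      rcases le_or_gt q' R' with hle | hlt
      · exact hq0min ⟨hq', hle⟩
      · have h1 : g 0 + 1 ≤ h q' := hR q' (le_trans (le_max_left R 0) hlt.le)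
        have h2 : h q' ≤ g q' := hlb q' hq'
        have h3 : g q0 ≤ g 0 := hq0min ⟨le_refl 0, le_max_right R 0⟩
        show g q0 ≤ g q'
        linarith
end Aux

/-- The probability simplex in `ℝ^C`. -/
def simplex (C : ℕ) : Set (Fin C → ℝ) := {q | (∀ c, 0 ≤ q c) ∧ ∑ c, q c = 1}

/-- The f-divergence `D_f(q‖p) = ∑_c p_c f(q_c / p_c)`. -/
noncomputable def fDiv {C : ℕ} (f : ℝ → ℝ) (q p : Fin C → ℝ) : ℝ :=
  ∑ c, p c * f (q c / p c)

/-- The convex conjugate of `D_f(·‖p)` over the probability simplex: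
`D_f^conj(v, p) = sup_{q ∈ Δ_C} (vᵀq − D_f(q‖p))`. -/
noncomputable def fDivConj {C : ℕ} (f : ℝ → ℝ) (v p : Fin C → ℝ) : ℝ :=
  sSup ((fun q => ∑ c, v c * q c - fDiv f q p) '' simplex C)

set_option maxHeartbeats 1000000 in
/-- Lemma 1 of the paper: for `f` satisfying Assumption (f) (the
derivative data being given by `f'` and `f''`) with finite right limit at `0`,
`p ∈ Δ_C⁺`, `a ∈ ℝ^C` and `ξ > 0`,
`min_v D_f^conj(v,p) + ξ‖v‖² + aᵀv = −sup_θ (−θ + ∑_c min_{q_c ≥ 0} p_c f(q_c/p_c)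
+ (a_c+q_c)²/(4ξ) + θ q_c)`, where the outer min and each inner min are attained. -/
theorem fDivConj_min_dual (C : ℕ) (hC : 0 < C)
    (f f' f'' : ℝ → ℝ)
    (hf_deriv : ∀ t ∈ Set.Ioi (0 : ℝ), HasDerivAt f (f' t) t)
    (hf_deriv2 : ∀ t ∈ Set.Ioi (0 : ℝ), HasDerivAt f' (f'' t) t)
    (hf''_cont : ContinuousOn f'' (Set.Ioi 0))
    (hf''_pos : ∀ t ∈ Set.Ioi (0 : ℝ), 0 < f'' t)
    (hf_one : f 1 = 0)
    (hf'_atBot : Filter.Tendsto f' (nhdsWithin 0 (Set.Ioi 0)) Filter.atBot)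
    (hf_zero : Filter.Tendsto f (nhdsWithin 0 (Set.Ioi 0)) (nhds (f 0)))
    (p : Fin C → ℝ) (hp_pos : ∀ c, 0 < p c) (hp_sum : ∑ c, p c = 1)
    (a : Fin C → ℝ) (ξ : ℝ) (hξ : 0 < ξ) :
    (∀ (θ : ℝ) (c : Fin C), ∃ q : ℝ, 0 ≤ q ∧
      (∀ q' : ℝ, 0 ≤ q' →
        p c * f (q / p c) + (a c + q) ^ 2 / (4 * ξ) + θ * q ≤
          p c * f (q' / p c) + (a c + q') ^ 2 / (4 * ξ) + θ * q') ∧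
      sInf ((fun q' => p c * f (q' / p c) + (a c + q') ^ 2 / (4 * ξ) + θ * q') ''
          Set.Ici 0)
        = p c * f (q / p c) + (a c + q) ^ 2 / (4 * ξ) + θ * q) ∧
    ∃ vmin : Fin C → ℝ,
      (∀ v : Fin C → ℝ,
        fDivConj f vmin p + ξ * ∑ c, vmin c ^ 2 + ∑ c, a c * vmin c ≤
          fDivConj f v p + ξ * ∑ c, v c ^ 2 + ∑ c, a c * v c) ∧
      fDivConj f vmin p + ξ * ∑ c, vmin c ^ 2 + ∑ c, a c * vmin c =
        - sSup (Set.range fun θ : ℝ =>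
            -θ + ∑ c, sInf ((fun q' =>
              p c * f (q' / p c) + (a c + q') ^ 2 / (4 * ξ) + θ * q') '' Set.Ici 0)) := by
  have htan := tangent hf_deriv hf_deriv2 hf''_pos hf_zero
  have hcont : ContinuousOn f (Set.Ici 0) := f_contIci hf_deriv hf_zero
  have hmono := f'_mono hf_deriv2 hf''_pos
  have part1 : ∀ (θ : ℝ) (c : Fin C), ∃ q : ℝ, 0 ≤ q ∧
      (∀ q' : ℝ, 0 ≤ q' →
        p c * f (q / p c) + (a c + q) ^ 2 / (4 * ξ) + θ * q ≤
          p c * f (q' / p c) + (a c + q') ^ 2 / (4 * ξ) + θ * q') ∧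
      sInf ((fun q' => p c * f (q' / p c) + (a c + q') ^ 2 / (4 * ξ) + θ * q') ''
          Set.Ici 0)
        = p c * f (q / p c) + (a c + q) ^ 2 / (4 * ξ) + θ * q :=
    fun θ c => inner_min hf_deriv hf_deriv2 hf''_pos hf_one hf_zero
      (p c) (a c) θ ξ (hp_pos c) hξ
  refine ⟨part1, ?_⟩
  -- per-coordinate cost and its derivative
  set ψ : Fin C → ℝ → ℝ := fun c x => p c * f (x / p c) + (a c + x) ^ 2 / (4 * ξ) with hψ
  set φ : Fin C → ℝ → ℝ := fun c x => f' (x / p c) + (a c + x) / (2 * ξ) with hφ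
  have hψderiv : ∀ (c : Fin C) (x : ℝ), 0 < x → HasDerivAt (ψ c) (φ c x) x := by
    intro c x hx
    have h1 : HasDerivAt (fun y : ℝ => y / p c) (1 / p c) x := (hasDerivAt_id x).div_const (p c)
    have h2 := (hf_deriv (x / p c) (div_pos hx (hp_pos c))).comp x h1
    have h3 : HasDerivAt (fun y => p c * f (y / p c)) (p c * (f' (x / p c) * (1 / p c))) x :=
      h2.const_mul (p c)
    have h4 : HasDerivAt (fun y : ℝ => (a c + y) ^ 2 / (4 * ξ))
        ((2 * (a c + x) ^ 1 * 1) / (4 * ξ)) x :=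
      (((hasDerivAt_id x).const_add (a c)).pow 2).div_const (4 * ξ)
    have h5 := h3.add h4
    refine h5.congr_deriv ?_
    have hpc := (hp_pos c).ne'
    show _ = f' (x / p c) + (a c + x) / (2 * ξ)
    field_simp; ring
  set G : (Fin C → ℝ) → ℝ := fun q => ∑ c, ψ c (q c) with hG
  -- minimize G over the simplex
  have hGmin : ∃ qs ∈ simplex C, ∀ q ∈ simplex C, G qs ≤ G q := by
    have hcomp : IsCompact (simplex C) := by
      have he : simplex C = stdSimplex ℝ (Fin C) := rfl
      rw [he]; exact isCompact_stdSimplex _ _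
    have hne : (simplex C).Nonempty := ⟨p, fun c => (hp_pos c).le, hp_sum⟩
    have hGcont : ContinuousOn G (simplex C) := by
      apply continuousOn_finset_sum
      intro c _
      apply ContinuousOn.add
      · have hc1 : ContinuousOn (fun q : Fin C → ℝ => q c / p c) (simplex C) :=
          Continuous.continuousOn (by fun_prop)
        exact continuousOn_const.mul (hcont.comp hc1
          (fun q hq => div_nonneg (hq.1 c) (hp_pos c).le))
      · fun_prop
    obtain ⟨qs, h1, h2⟩ := hcomp.exists_isMinOn hne hGcont
    exact ⟨qs, h1, fun q hq => h2 hq⟩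
  obtain ⟨qs, hqs_mem, hqs_min⟩ := hGmin
  -- interiority
  have hqs_pos : ∀ c, 0 < qs c := by
    by_contra hcon
    push_neg at hcon
    obtain ⟨c, hc⟩ := hcon
    have hc0 : qs c = 0 := le_antisymm hc (hqs_mem.1 c)
    have hex : ∃ b, 0 < qs b := by
      by_contra hb
      push_neg at hb
      have hz : ∑ e, qs e = 0 :=
        Finset.sum_eq_zero (fun e _ => le_antisymm (hb e) (hqs_mem.1 e))
      rw [hqs_mem.2] at hz
      norm_num at hz
    obtain ⟨b, hb⟩ := hex
    have hbc : b ≠ c := fun h => by rw [h, hc0] at hb; exact lt_irrefl 0 hb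
    set M : ℝ := -f' (qs b / (2 * p b)) + (2 * |a c| + 1) / (4 * ξ)
      + (2 * |a b + qs b| + 1) / (4 * ξ) with hM
    obtain ⟨δ, hδpos, hδ⟩ := Metric.eventually_nhds_iff.mp
      (eventually_nhdsWithin_iff.mp (hf'_atBot.eventually (eventually_lt_atBot (-M))))
    set ε : ℝ := min (min (δ * p c / 2) 1) (qs b / 2) with hε
    have hεpos : 0 < ε := lt_min (lt_min (div_pos (mul_pos hδpos (hp_pos c)) two_pos) one_pos) (half_pos hb)
    have hε1 : ε ≤ 1 := le_trans (min_le_left _ _) (min_le_right _ _)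
    have hεb : ε ≤ qs b / 2 := min_le_right _ _
    have hεδ : ε / p c < δ := by
      have h1 : ε ≤ δ * p c / 2 := le_trans (min_le_left _ _) (min_le_left _ _)
      rw [div_lt_iff₀ (hp_pos c)]
      nlinarith [hp_pos c, hδpos]
    have hf'ε : f' (ε / p c) < -M := by
      apply hδ
      · rw [Real.dist_eq, sub_zero, abs_of_pos (div_pos hεpos (hp_pos c))]
        exact hεδ
      · exact Set.mem_Ioi.mpr (div_pos hεpos (hp_pos c))
    set qε : Fin C → ℝ := fun e => qs e + (if e = c then ε else 0)
      + (if e = b then -ε else 0) with hqεd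
    have hqεc : qε c = ε := by
      simp [hqεd, Ne.symm hbc, hc0]
    have hqεb : qε b = qs b - ε := by
      simp [hqεd, hbc]
      ring
    have hqεe : ∀ e, e ≠ c → e ≠ b → qε e = qs e := by
      intro e h1 h2
      simp [hqεd, h1, h2]
    have hqεmem : qε ∈ simplex C := by
      constructor
      · intro e
        by_cases h1 : e = c
        · rw [h1, hqεc]; exact hεpos.le
        · by_cases h2 : e = b
          · rw [h2, hqεb]; linarith
          · rw [hqεe e h1 h2]; exact hqs_mem.1 e
      · simp only [hqεd]
        rw [Finset.sum_add_distrib, Finset.sum_add_distrib,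
          Finset.sum_ite_eq' Finset.univ c (fun _ => ε),
          Finset.sum_ite_eq' Finset.univ b (fun _ => -ε), hqs_mem.2]
        simp
    have hdiff : G qε - G qs = (ψ c (qε c) - ψ c (qs c)) + (ψ b (qε b) - ψ b (qs b)) := by
      have h1 : ∑ e ∈ ({c, b} : Finset (Fin C)), (ψ e (qε e) - ψ e (qs e)) =
          ∑ e, (ψ e (qε e) - ψ e (qs e)) := by
        apply Finset.sum_subset (Finset.subset_univ _)
        intro e _ he
        simp only [Finset.mem_insert, Finset.mem_singleton] at he
        push_neg at he
        rw [hqεe e he.1 he.2]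
        ring
      rw [Finset.sum_pair (Ne.symm hbc)] at h1
      rw [Finset.sum_sub_distrib] at h1
      show (∑ e, ψ e (qε e)) - (∑ e, ψ e (qs e)) = _
      linarith
    -- bound for coordinate c
    have hTc : ψ c (qε c) - ψ c (qs c) ≤ ε * f' (ε / p c)
        + ε * ((2 * |a c| + 1) / (4 * ξ)) := by
      rw [hqεc, hc0]
      have hpc := (hp_pos c).ne'
      have hfc : p c * f (ε / p c) - p c * f (0 / p c) ≤ ε * f' (ε / p c) := by
        have h1 := htan (ε / p c) (Set.mem_Ioi.mpr (div_pos hεpos (hp_pos c))) 0 Set.self_mem_Ici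
        have h2 := mul_le_mul_of_nonneg_left h1 (hp_pos c).le
        have h3 : p c * (f (ε / p c) + f' (ε / p c) * (0 - ε / p c)) =
            p c * f (ε / p c) - ε * f' (ε / p c) := by field_simp; ring
        rw [h3] at h2
        rw [zero_div]
        linarith
      have hquad : (a c + ε) ^ 2 / (4 * ξ) - (a c + 0) ^ 2 / (4 * ξ) ≤
          ε * ((2 * |a c| + 1) / (4 * ξ)) := by
        have h4 : (a c + ε) ^ 2 - (a c + 0) ^ 2 ≤ ε * (2 * |a c| + 1) := by
          nlinarith [le_abs_self (a c), neg_abs_le (a c)]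
        calc (a c + ε) ^ 2 / (4 * ξ) - (a c + 0) ^ 2 / (4 * ξ)
            = ((a c + ε) ^ 2 - (a c + 0) ^ 2) / (4 * ξ) := by ring
          _ ≤ (ε * (2 * |a c| + 1)) / (4 * ξ) := by
              apply div_le_div_of_nonneg_right h4 (by positivity)
          _ = ε * ((2 * |a c| + 1) / (4 * ξ)) := by ring
      simp only [hψ]
      linarith
    -- bound for coordinate b
    have hTb : ψ b (qε b) - ψ b (qs b) ≤ ε * (-f' (qs b / (2 * p b)))
        + ε * ((2 * |a b + qs b| + 1) / (4 * ξ)) := by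
      rw [hqεb]
      have hpb := (hp_pos b).ne'
      have hs_pos : 0 < (qs b - ε) / p b := by
        apply div_pos _ (hp_pos b)
        linarith
      have hfb : p b * f ((qs b - ε) / p b) - p b * f (qs b / p b) ≤
          ε * (-f' (qs b / (2 * p b))) := by
        have h1 := htan ((qs b - ε) / p b) hs_pos (qs b / p b)
          (le_of_lt (div_pos hb (hp_pos b)))
        have h2 := mul_le_mul_of_nonneg_left h1 (hp_pos b).le
        have h3 : p b * (f ((qs b - ε) / p b) + f' ((qs b - ε) / p b) *
            (qs b / p b - (qs b - ε) / p b)) =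
            p b * f ((qs b - ε) / p b) + ε * f' ((qs b - ε) / p b) := by field_simp; ring
        rw [h3] at h2
        have h4 : f' (qs b / (2 * p b)) ≤ f' ((qs b - ε) / p b) := by
          have h2pb : (0:ℝ) < 2 * p b := by linarith [hp_pos b]
          rcases eq_or_lt_of_le (show qs b / (2 * p b) ≤ (qs b - ε) / p b by
            rw [div_le_div_iff₀ h2pb (hp_pos b)]
            nlinarith [hp_pos b]) with heq | hlt
          · rw [heq]
          · exact (hmono (Set.mem_Ioi.mpr (div_pos hb h2pb)) hs_pos hlt).le
        nlinarith [hεpos]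
      have hquad : (a b + (qs b - ε)) ^ 2 / (4 * ξ) - (a b + qs b) ^ 2 / (4 * ξ) ≤
          ε * ((2 * |a b + qs b| + 1) / (4 * ξ)) := by
        have h4 : (a b + (qs b - ε)) ^ 2 - (a b + qs b) ^ 2 ≤
            ε * (2 * |a b + qs b| + 1) := by
          nlinarith [le_abs_self (a b + qs b), neg_abs_le (a b + qs b)]
        calc (a b + (qs b - ε)) ^ 2 / (4 * ξ) - (a b + qs b) ^ 2 / (4 * ξ)
            = ((a b + (qs b - ε)) ^ 2 - (a b + qs b) ^ 2) / (4 * ξ) := by ring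
          _ ≤ (ε * (2 * |a b + qs b| + 1)) / (4 * ξ) := by
              apply div_le_div_of_nonneg_right h4 (by positivity)
          _ = ε * ((2 * |a b + qs b| + 1) / (4 * ξ)) := by ring
      simp only [hψ]
      linarith
    have hneg : G qε - G qs < 0 := by
      rw [hdiff]
      have hsumM : ε * f' (ε / p c) + ε * ((2 * |a c| + 1) / (4 * ξ))
          + (ε * (-f' (qs b / (2 * p b))) + ε * ((2 * |a b + qs b| + 1) / (4 * ξ)))
          = ε * (f' (ε / p c) + M) := by
        rw [hM]; ring
      have h9 : f' (ε / p c) + M < 0 := by linarith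
      have h10 : ε * (f' (ε / p c) + M) < 0 := mul_neg_of_pos_of_neg hεpos h9
      calc ψ c (qε c) - ψ c (qs c) + (ψ b (qε b) - ψ b (qs b))
          ≤ ε * f' (ε / p c) + ε * ((2 * |a c| + 1) / (4 * ξ))
            + (ε * -f' (qs b / (2 * p b)) + ε * ((2 * |a b + qs b| + 1) / (4 * ξ))) := by
            linarith
        _ = ε * (f' (ε / p c) + M) := hsumM
        _ < 0 := h10
    have := hqs_min qε hqεmem
    linarith
  -- KKT
  have hKKT : ∀ c d : Fin C, φ c (qs c) = φ d (qs d) := by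
    intro c d
    rcases eq_or_ne c d with hcd | hcd
    · rw [hcd]
    set dir : Fin C → ℝ := fun e => if e = c then 1 else if e = d then -1 else 0 with hdir
    have hdir_split : ∀ e, dir e = (if e = c then (1:ℝ) else 0) + (if e = d then -1 else 0) := by
      intro e
      by_cases h1 : e = c
      · simp [hdir, h1, hcd]
      · by_cases h2 : e = d <;> simp [hdir, h1, h2, Ne.symm hcd]
    have hdirsum : ∑ e, dir e = 0 := by
      rw [Finset.sum_congr rfl (fun e _ => hdir_split e), Finset.sum_add_distrib,
        Finset.sum_ite_eq' Finset.univ c (fun _ => (1:ℝ)),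
        Finset.sum_ite_eq' Finset.univ d (fun _ => (-1:ℝ))]
      simp
    set L : ℝ → ℝ := fun ε => ∑ e, ψ e (qs e + ε * dir e) with hL
    have hLderiv : HasDerivAt L (∑ e, φ e (qs e) * dir e) 0 := by
      apply HasDerivAt.fun_sum
      intro e _
      have hinner : HasDerivAt (fun ε : ℝ => qs e + ε * dir e) (dir e) 0 := by
        simpa using ((hasDerivAt_id (0:ℝ)).mul_const (dir e)).const_add (qs e)
      have houter := hψderiv e (qs e + 0 * dir e) (by simpa using hqs_pos e)
      have hc := HasDerivAt.comp 0 houter hinner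
      simpa [Function.comp_def] using hc
    have hmin : IsLocalMin L 0 := by
      have hδ : 0 < min (qs c) (qs d) := lt_min (hqs_pos c) (hqs_pos d)
      filter_upwards [Metric.ball_mem_nhds (0:ℝ) hδ] with ε hε
      rw [Metric.mem_ball, Real.dist_eq, sub_zero] at hε
      have habs := abs_lt.mp hε
      have hmem : (fun e => qs e + ε * dir e) ∈ simplex C := by
        constructor
        · intro e
          show 0 ≤ qs e + ε * dir e
          by_cases h1 : e = c
          · have hd : dir e = 1 := by simp [hdir, h1]
            have h3 : min (qs c) (qs d) ≤ qs c := min_le_left _ _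
            rw [hd, mul_one, h1]
            linarith [habs.1]
          · by_cases h2 : e = d
            · have hd : dir e = -1 := by simp [hdir, h1, h2, Ne.symm hcd]
              have h3 : min (qs c) (qs d) ≤ qs d := min_le_right _ _
              rw [hd, h2]
              linarith [habs.2]
            · have hd : dir e = 0 := by simp [hdir, h1, h2]
              rw [hd, mul_zero, add_zero]
              exact hqs_mem.1 e
        · rw [Finset.sum_add_distrib, ← Finset.mul_sum, hdirsum, hqs_mem.2]; ring
      have h0 : L 0 = G qs := by simp [hL, hG]
      calc L 0 = G qs := h0
        _ ≤ G (fun e => qs e + ε * dir e) := hqs_min _ hmem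
        _ = L ε := rfl
    have hzero := hmin.hasDerivAt_eq_zero hLderiv
    have hsplit : ∑ e, φ e (qs e) * dir e = φ c (qs c) - φ d (qs d) := by
      have h : ∀ e, φ e (qs e) * dir e =
          (if e = c then φ c (qs c) else 0) + (if e = d then -φ d (qs d) else 0) := by
        intro e
        by_cases h1 : e = c
        · have hd : dir e = 1 := by simp [hdir, h1]
          rw [hd, h1]
          simp [hcd]
        · by_cases h2 : e = d
          · have hd : dir e = -1 := by simp [hdir, h1, h2, Ne.symm hcd]
            rw [hd, h2]
            simp [Ne.symm hcd]
          · have hd : dir e = 0 := by simp [hdir, h1, h2]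
            rw [hd]
            simp [h1, h2]
      rw [Finset.sum_congr rfl (fun e _ => h e), Finset.sum_add_distrib,
        Finset.sum_ite_eq' Finset.univ c (fun _ => φ c (qs c)),
        Finset.sum_ite_eq' Finset.univ d (fun _ => -φ d (qs d))]
      simp [sub_eq_add_neg]
    rw [hsplit] at hzero
    linarith
  set c0 : Fin C := ⟨0, hC⟩ with hc0
  set θs : ℝ := -φ c0 (qs c0) with hθs
  have hθ : ∀ c, φ c (qs c) = -θs := fun c => by rw [hKKT c c0, hθs, neg_neg]
  set vs : Fin C → ℝ := fun c => -(a c + qs c) / (2 * ξ) with hvs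
  have hf's : ∀ c, f' (qs c / p c) = vs c - θs := by
    intro c
    have := hθ c
    simp only [hφ, hvs, neg_div] at this ⊢
    linarith
  -- fDiv is nonneg on the simplex
  have hDf_nonneg : ∀ q ∈ simplex C, 0 ≤ fDiv f q p := by
    intro q hq
    have key : ∀ c, f' 1 * (q c - p c) ≤ p c * f (q c / p c) := by
      intro c
      have h1 := htan 1 (by norm_num) (q c / p c) (div_nonneg (hq.1 c) (hp_pos c).le)
      rw [hf_one] at h1
      have h2 := mul_le_mul_of_nonneg_left h1 (hp_pos c).le
      have hpc := (hp_pos c).ne'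
      calc f' 1 * (q c - p c) = p c * (0 + f' 1 * (q c / p c - 1)) := by field_simp; ring
        _ ≤ p c * f (q c / p c) := h2
    have hsum : ∑ c, f' 1 * (q c - p c) ≤ fDiv f q p := Finset.sum_le_sum (fun c _ => key c)
    have hz : ∑ c, f' 1 * (q c - p c) = 0 := by
      rw [← Finset.mul_sum, Finset.sum_sub_distrib, hq.2, hp_sum]; ring
    linarith
  have hbdd : ∀ v : Fin C → ℝ,
      BddAbove ((fun q => ∑ c, v c * q c - fDiv f q p) '' simplex C) := by
    intro v
    refine ⟨∑ c, |v c|, ?_⟩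
    rintro x ⟨q, hq, rfl⟩
    have h1 : ∑ c, v c * q c ≤ ∑ c, |v c| := by
      apply Finset.sum_le_sum
      intro c _
      have hq1 : q c ≤ 1 := by
        rw [← hq.2]
        exact Finset.single_le_sum (fun i _ => hq.1 i) (Finset.mem_univ c)
      calc v c * q c ≤ |v c| * q c := mul_le_mul_of_nonneg_right (le_abs_self _) (hq.1 c)
        _ ≤ |v c| * 1 := mul_le_mul_of_nonneg_left hq1 (abs_nonneg _)
        _ = |v c| := mul_one _
    have h2 := hDf_nonneg q hq
    simp only []
    linarith
  have hconj_ge : ∀ v : Fin C → ℝ,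
      ∑ c, v c * qs c - fDiv f qs p ≤ fDivConj f v p :=
    fun v => le_csSup (hbdd v) ⟨qs, hqs_mem, rfl⟩
  have hconj_vs : fDivConj f vs p = ∑ c, vs c * qs c - fDiv f qs p := by
    apply IsGreatest.csSup_eq
    constructor
    · exact ⟨qs, hqs_mem, rfl⟩
    · rintro x ⟨q, hq, rfl⟩
      simp only []
      have key : ∀ c, (vs c - θs) * (q c - qs c) ≤
          p c * f (q c / p c) - p c * f (qs c / p c) := by
        intro c
        have hs := div_pos (hqs_pos c) (hp_pos c)
        have h1 := htan (qs c / p c) hs (q c / p c) (div_nonneg (hq.1 c) (hp_pos c).le)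
        have h2 := mul_le_mul_of_nonneg_left h1 (hp_pos c).le
        have hpc := (hp_pos c).ne'
        have h3 : p c * (f (qs c / p c) + f' (qs c / p c) * (q c / p c - qs c / p c)) =
            p c * f (qs c / p c) + f' (qs c / p c) * (q c - qs c) := by field_simp
        rw [h3, hf's c] at h2
        linarith
      have hsum := Finset.sum_le_sum (fun c (_ : c ∈ Finset.univ) => key c)
      have e1 : ∑ c, (vs c - θs) * (q c - qs c) =
          (∑ c, vs c * q c) - (∑ c, vs c * qs c) := by
        have h : ∀ c : Fin C, (vs c - θs) * (q c - qs c) =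
            (vs c * q c - vs c * qs c) - (θs * q c - θs * qs c) := fun c => by ring
        rw [Finset.sum_congr rfl (fun c _ => h c), Finset.sum_sub_distrib,
          Finset.sum_sub_distrib, Finset.sum_sub_distrib,
          ← Finset.mul_sum, ← Finset.mul_sum, hq.2, hqs_mem.2]
        ring
      have e2 : ∑ c, (p c * f (q c / p c) - p c * f (qs c / p c)) =
          fDiv f q p - fDiv f qs p := by
        rw [Finset.sum_sub_distrib]; rfl
      rw [e1, e2] at hsum
      linarith
  -- value of the objective at vs
  have eG : G qs = fDiv f qs p + ∑ c, (a c + qs c) ^ 2 / (4 * ξ) := by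
    simp only [hG, hψ, fDiv, Finset.sum_add_distrib]
  have hval : fDivConj f vs p + ξ * ∑ c, vs c ^ 2 + ∑ c, a c * vs c = -G qs := by
    rw [hconj_vs]
    have hz : ∀ c : Fin C, vs c * qs c + ξ * vs c ^ 2 + a c * vs c
        + (a c + qs c) ^ 2 / (4 * ξ) = 0 := by
      intro c; simp only [hvs]; field_simp; ring
    have hzsum : ∑ c, (vs c * qs c + ξ * vs c ^ 2 + a c * vs c
        + (a c + qs c) ^ 2 / (4 * ξ)) = 0 := Finset.sum_eq_zero (fun c _ => hz c)
    have e : ∑ c, (vs c * qs c + ξ * vs c ^ 2 + a c * vs c + (a c + qs c) ^ 2 / (4 * ξ)) =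
        (∑ c, vs c * qs c) + ξ * (∑ c, vs c ^ 2) + (∑ c, a c * vs c)
          + ∑ c, (a c + qs c) ^ 2 / (4 * ξ) := by
      rw [Finset.mul_sum, ← Finset.sum_add_distrib, ← Finset.sum_add_distrib,
        ← Finset.sum_add_distrib]
    rw [e] at hzsum
    rw [eG]
    linarith
  -- vs is a minimizer
  have hminim : ∀ v : Fin C → ℝ, -G qs ≤
      fDivConj f v p + ξ * ∑ c, v c ^ 2 + ∑ c, a c * v c := by
    intro v
    have h1 := hconj_ge v
    have h2 : 0 ≤ ∑ c, (ξ * v c ^ 2 + (a c + qs c) * v c + (a c + qs c) ^ 2 / (4 * ξ)) := by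
      apply Finset.sum_nonneg
      intro c _
      have he : ξ * v c ^ 2 + (a c + qs c) * v c + (a c + qs c) ^ 2 / (4 * ξ)
          = (2 * ξ * v c + (a c + qs c)) ^ 2 / (4 * ξ) := by field_simp; ring
      rw [he]; positivity
    have e : ∑ c, (ξ * v c ^ 2 + (a c + qs c) * v c + (a c + qs c) ^ 2 / (4 * ξ)) =
        ξ * (∑ c, v c ^ 2) + ((∑ c, v c * qs c) + (∑ c, a c * v c))
          + ∑ c, (a c + qs c) ^ 2 / (4 * ξ) := by
      rw [Finset.mul_sum, ← Finset.sum_add_distrib, ← Finset.sum_add_distrib,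
        ← Finset.sum_add_distrib]
      exact Finset.sum_congr rfl (fun c _ => by ring)
    rw [e] at h2
    rw [eG]
    linarith
  -- the θ-supremum equals G qs
  have hsup : sSup (Set.range fun θ : ℝ =>
      -θ + ∑ c, sInf ((fun q' =>
        p c * f (q' / p c) + (a c + q') ^ 2 / (4 * ξ) + θ * q') '' Set.Ici 0)) = G qs := by
    have hub : ∀ (θ : ℝ) (c : Fin C),
        sInf ((fun q' => p c * f (q' / p c) + (a c + q') ^ 2 / (4 * ξ) + θ * q') ''
          Set.Ici 0) ≤ ψ c (qs c) + θ * qs c := by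
      intro θ c
      obtain ⟨qm, hqm0, hqmmin, hqmeq⟩ := part1 θ c
      rw [hqmeq]
      have := hqmmin (qs c) (hqs_pos c).le
      simp only [hψ]
      linarith
    have inner_eq : ∀ c : Fin C,
        sInf ((fun q' => p c * f (q' / p c) + (a c + q') ^ 2 / (4 * ξ) + θs * q') ''
          Set.Ici 0) = ψ c (qs c) + θs * qs c := by
      intro c
      have hge : ∀ q' : ℝ, 0 ≤ q' → ψ c (qs c) + θs * qs c ≤
          p c * f (q' / p c) + (a c + q') ^ 2 / (4 * ξ) + θs * q' := by
        intro q' hq'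
        have hs := div_pos (hqs_pos c) (hp_pos c)
        have h1 := htan (qs c / p c) hs (q' / p c) (div_nonneg hq' (hp_pos c).le)
        have h2 := mul_le_mul_of_nonneg_left h1 (hp_pos c).le
        have hpc := (hp_pos c).ne'
        have h3 : p c * (f (qs c / p c) + f' (qs c / p c) * (q' / p c - qs c / p c)) =
            p c * f (qs c / p c) + f' (qs c / p c) * (q' - qs c) := by field_simp
        rw [h3] at h2
        have h4 : (a c + qs c) ^ 2 / (4 * ξ) + (a c + qs c) / (2 * ξ) * (q' - qs c) ≤
            (a c + q') ^ 2 / (4 * ξ) := by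
          have h5 : (a c + q') ^ 2 / (4 * ξ) -
              ((a c + qs c) ^ 2 / (4 * ξ) + (a c + qs c) / (2 * ξ) * (q' - qs c)) =
              (q' - qs c) ^ 2 / (4 * ξ) := by field_simp; ring
          nlinarith [div_nonneg (sq_nonneg (q' - qs c)) (by positivity : (0:ℝ) ≤ 4 * ξ)]
        have h6 := hθ c
        simp only [hφ] at h6
        have h7 : f' (qs c / p c) * (q' - qs c) + (a c + qs c) / (2 * ξ) * (q' - qs c) =
            θs * qs c - θs * q' := by linear_combination (q' - qs c) * h6
        simp only [hψ]
        linarith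
      obtain ⟨qm, hqm0, hqmmin, hqmeq⟩ := part1 θs c
      rw [hqmeq]
      have hle := hqmmin (qs c) (hqs_pos c).le
      have hge' := hge qm hqm0
      simp only [hψ] at hge' ⊢
      linarith
    apply IsGreatest.csSup_eq
    constructor
    · refine ⟨θs, ?_⟩
      show -θs + _ = G qs
      rw [Finset.sum_congr rfl (fun c _ => inner_eq c), Finset.sum_add_distrib,
        ← Finset.mul_sum, hqs_mem.2, mul_one]
      show -θs + (G qs + θs) = G qs
      ring
    · rintro x ⟨θ, rfl⟩
      show -θ + _ ≤ G qs
      have hsum := Finset.sum_le_sum (fun c (_ : c ∈ Finset.univ) => hub θ c)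
      rw [Finset.sum_add_distrib, ← Finset.mul_sum, hqs_mem.2, mul_one] at hsum
      have : (∑ c, ψ c (qs c)) = G qs := rfl
      linarith
  refine ⟨vs, ?_, ?_⟩
  · intro v; rw [hval]; exact hminim v
  · rw [hval, hsup]
end

section
/- Let f : [0,∞) → ℝ ∪ {∞} be strictly convex, continuously differentiable on (0,∞), with f(0) = lim_{t→0⁺} f(t), f(1) = 0, and f′(t) → −∞ as t → 0⁺; let φ denote the inverse of f′ (defined on the range of f′). Fix p ∈ Δ_C⁺ and v ∈ ℝ^C. Then there is a unique γ ∈ ℝ such that γ + v_c lies in the range of f′ for every c ∈ [C] and Σ_{c=1}^C p_c φ(γ + v_c) = 1; moreover, the function q ↦ D_f(q‖p) − vᵀq has a unique minimizer q* over Δ_C, and it is given by q*_c = p_c · φ(γ + v_c) for each c ∈ [C]. -/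
/-- The (possibly infinite-valued) f-divergence `D_f(q‖p) = ∑_c p_c f(q_c/p_c)`
for an extended-real-valued `f`. -/
noncomputable def fDivE {C : ℕ} (f : ℝ → EReal) (q p : Fin C → ℝ) : EReal :=
  ∑ c, (p c : EReal) * f (q c / p c)

open Set Filter

section Aux

variable {f : ℝ → EReal} {f' : ℝ → ℝ}

lemma er_coe_sum {ι : Type*} (s : Finset ι) (t : ι → ℝ) :
    ((∑ i ∈ s, t i : ℝ) : EReal) = ∑ i ∈ s, ((t i : ℝ) : EReal) :=
  map_sum (⟨⟨Real.toEReal, EReal.coe_zero⟩, EReal.coe_add⟩ : ℝ →+ EReal) t s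

lemma er_mul_le {p t : ℝ} (hp : 0 < p) {a : EReal} (h : (t : EReal) ≤ a) :
    ((p * t : ℝ) : EReal) ≤ (p : EReal) * a := by
  induction a using EReal.rec with
  | bot => exact absurd h (EReal.bot_lt_coe t : (⊥ : EReal) < t).not_ge
  | coe s =>
      rw [← EReal.coe_mul, EReal.coe_le_coe_iff]
      exact mul_le_mul_of_nonneg_left (EReal.coe_le_coe_iff.mp h) hp.le
  | top => rw [EReal.coe_mul_top_of_pos hp]; exact le_top

lemma er_mul_lt {p t : ℝ} (hp : 0 < p) {a : EReal} (h : (t : EReal) < a) :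
    ((p * t : ℝ) : EReal) < (p : EReal) * a := by
  induction a using EReal.rec with
  | bot => exact absurd h (EReal.bot_lt_coe t : (⊥ : EReal) < t).not_gt
  | coe s =>
      rw [← EReal.coe_mul, EReal.coe_lt_coe_iff]
      exact mul_lt_mul_of_pos_left (EReal.coe_lt_coe_iff.mp h) hp
  | top => rw [EReal.coe_mul_top_of_pos hp]; exact EReal.coe_lt_top _

lemma aux_strictConvexOn
    (hf_real : ∀ t : ℝ, 0 < t → ∃ y : ℝ, f t = (y : EReal))
    (hf_strict_conv : ∀ x ∈ Set.Ici (0 : ℝ), ∀ y ∈ Set.Ici (0 : ℝ), x ≠ y →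
      ∀ s t : ℝ, 0 < s → 0 < t → s + t = 1 →
        f (s * x + t * y) < (s : EReal) * f x + (t : EReal) * f y) :
    StrictConvexOn ℝ (Set.Ioi (0:ℝ)) (fun t => (f t).toReal) := by
  refine ⟨convex_Ioi 0, fun x hx y hy hxy a b ha hb hab => ?_⟩
  obtain ⟨gx, hgx⟩ := hf_real x hx
  obtain ⟨gy, hgy⟩ := hf_real y hy
  have hx0 : (0:ℝ) < x := hx
  have hy0 : (0:ℝ) < y := hy
  have hz : (0:ℝ) < a * x + b * y := by positivity
  obtain ⟨gz, hgz⟩ := hf_real _ hz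
  have := hf_strict_conv x (mem_Ici.2 hx0.le) y (mem_Ici.2 hy0.le) hxy a b ha hb hab
  rw [hgx, hgy, hgz, ← EReal.coe_mul, ← EReal.coe_mul, ← EReal.coe_add,
    EReal.coe_lt_coe_iff] at this
  simpa [smul_eq_mul, hgx, hgy, hgz] using this

lemma aux_grad_strict {g : ℝ → ℝ} (hconv : StrictConvexOn ℝ (Ioi (0:ℝ)) g)
    (hderiv : ∀ t : ℝ, 0 < t → HasDerivAt g (f' t) t)
    {w x : ℝ} (hw : 0 < w) (hx : 0 < x) (hne : x ≠ w) :
    g w + f' w * (x - w) < g x := by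
  rcases lt_or_gt_of_ne hne with h | h
  · have hs := hconv.slope_lt_of_hasDerivAt (mem_Ioi.2 hx) (mem_Ioi.2 hw) h (hderiv w hw)
    rw [slope_def_field] at hs
    have hwx : 0 < w - x := by linarith
    rw [div_lt_iff₀ hwx] at hs
    nlinarith
  · have hs := hconv.lt_slope_of_hasDerivAt (mem_Ioi.2 hw) (mem_Ioi.2 hx) h (hderiv w hw)
    rw [slope_def_field] at hs
    have hwx : 0 < x - w := by linarith
    rw [lt_div_iff₀ hwx] at hs
    nlinarith

lemma aux_strictMono {g : ℝ → ℝ} (hconv : StrictConvexOn ℝ (Ioi (0:ℝ)) g)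
    (hderiv : ∀ t : ℝ, 0 < t → HasDerivAt g (f' t) t) :
    StrictMonoOn f' (Ioi (0:ℝ)) := fun x hx y hy hxy =>
  (hconv.lt_slope_of_hasDerivAt hx hy hxy (hderiv x hx)).trans
    (hconv.slope_lt_of_hasDerivAt hx hy hxy (hderiv y hy))

lemma aux_grad_le
    (hf_real : ∀ t : ℝ, 0 < t → ∃ y : ℝ, f t = (y : EReal))
    (hconv : StrictConvexOn ℝ (Ioi (0:ℝ)) (fun t => (f t).toReal))
    (hderiv : ∀ t : ℝ, 0 < t → HasDerivAt (fun u => (f u).toReal) (f' t) t)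
    (hf_zero : Filter.Tendsto f (nhdsWithin 0 (Set.Ioi 0)) (nhds (f 0)))
    {w x : ℝ} (hw : 0 < w) (hx : 0 ≤ x) :
    (((f w).toReal + f' w * (x - w) : ℝ) : EReal) ≤ f x := by
  set g : ℝ → ℝ := fun t => (f t).toReal with hg
  have hcoe : ∀ t : ℝ, 0 < t → f t = ((g t : ℝ) : EReal) := by
    intro t ht
    obtain ⟨y, hy⟩ := hf_real t ht
    rw [hy]; simp [hg, hy]
  rcases hx.lt_or_eq with hx0 | hx0
  · rw [hcoe x hx0, EReal.coe_le_coe_iff]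
    rcases eq_or_ne x w with rfl | hne
    · simp [hg]
    · exact (aux_grad_strict hconv hderiv hw hx0 hne).le
  · subst hx0
    have hev : ∀ᶠ t in nhdsWithin (0:ℝ) (Set.Ioi 0),
        ((g w + f' w * (t - w) : ℝ) : EReal) ≤ f t := by
      filter_upwards [self_mem_nhdsWithin] with t ht
      rw [hcoe t ht, EReal.coe_le_coe_iff]
      rcases eq_or_ne t w with rfl | hne
      · simp
      · exact (aux_grad_strict hconv hderiv hw ht hne).le
    have htend : Tendsto (fun t : ℝ => ((g w + f' w * (t - w) : ℝ) : EReal))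
        (nhdsWithin (0:ℝ) (Set.Ioi 0)) (nhds (((g w + f' w * ((0:ℝ) - w) : ℝ) : EReal))) := by
      apply Filter.Tendsto.comp (continuous_coe_real_ereal.tendsto _)
      exact ((continuous_const.add (continuous_const.mul
        ((continuous_id).sub continuous_const))).tendsto 0).mono_left nhdsWithin_le_nhds
    exact le_of_tendsto_of_tendsto htend hf_zero hev

lemma aux_grad_lt
    (hf_real : ∀ t : ℝ, 0 < t → ∃ y : ℝ, f t = (y : EReal))
    (hconv : StrictConvexOn ℝ (Ioi (0:ℝ)) (fun t => (f t).toReal))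
    (hderiv : ∀ t : ℝ, 0 < t → HasDerivAt (fun u => (f u).toReal) (f' t) t)
    (hf_zero : Filter.Tendsto f (nhdsWithin 0 (Set.Ioi 0)) (nhds (f 0)))
    {w x : ℝ} (hw : 0 < w) (hx : 0 ≤ x) (hne : x ≠ w) :
    (((f w).toReal + f' w * (x - w) : ℝ) : EReal) < f x := by
  set g : ℝ → ℝ := fun t => (f t).toReal with hg
  rcases hx.lt_or_eq with hx0 | hx0
  · have hcx : f x = ((g x : ℝ) : EReal) := by
      obtain ⟨y, hy⟩ := hf_real x hx0; rw [hy]; simp [hg, hy]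
    rw [hcx, EReal.coe_lt_coe_iff]
    exact aux_grad_strict hconv hderiv hw hx0 hne
  · subst hx0
    set t := w / 2 with htdef
    have ht : 0 < t := by positivity
    have htw : t ≠ w := by
      simp only [htdef]; intro h; nlinarith
    have h1 : g w + f' w * (t - w) < g t := aux_grad_strict hconv hderiv hw ht htw
    have h2 : f' t < f' w := aux_strictMono hconv hderiv (mem_Ioi.2 ht) (mem_Ioi.2 hw)
      (by rw [htdef]; linarith)
    have h3 : (((g t + f' t * ((0:ℝ) - t)) : ℝ) : EReal) ≤ f 0 :=
      aux_grad_le hf_real hconv hderiv hf_zero ht le_rfl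
    refine lt_of_lt_of_le ?_ h3
    rw [EReal.coe_lt_coe_iff]
    nlinarith

lemma aux_min {C : ℕ}
    (hf_real : ∀ t : ℝ, 0 < t → ∃ y : ℝ, f t = (y : EReal))
    (hconv : StrictConvexOn ℝ (Ioi (0:ℝ)) (fun t => (f t).toReal))
    (hderiv : ∀ t : ℝ, 0 < t → HasDerivAt (fun u => (f u).toReal) (f' t) t)
    (hf_zero : Filter.Tendsto f (nhdsWithin 0 (Set.Ioi 0)) (nhds (f 0)))
    (p : Fin C → ℝ) (hp_pos : ∀ c, 0 < p c)
    (v : Fin C → ℝ) (γ : ℝ) (w : Fin C → ℝ)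
    (hw : ∀ c, 0 < w c ∧ f' (w c) = γ + v c) (hwsum : ∑ c, p c * w c = 1) :
    (fun c => p c * w c) ∈ simplex C ∧
    (∀ q ∈ simplex C,
      fDivE f (fun c => p c * w c) p - ((∑ c, v c * (p c * w c) : ℝ) : EReal)
        ≤ fDivE f q p - ((∑ c, v c * q c : ℝ) : EReal)) ∧
    (∀ q ∈ simplex C, q ≠ (fun c => p c * w c) →
      fDivE f (fun c => p c * w c) p - ((∑ c, v c * (p c * w c) : ℝ) : EReal)
        < fDivE f q p - ((∑ c, v c * q c : ℝ) : EReal)) := by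
  set g : ℝ → ℝ := fun t => (f t).toReal with hg
  have hcoe : ∀ t : ℝ, 0 < t → f t = ((g t : ℝ) : EReal) := by
    intro t ht
    obtain ⟨y, hy⟩ := hf_real t ht
    rw [hy]; simp [hg, hy]
  have hmem : (fun c => p c * w c) ∈ simplex C := by
    constructor
    · intro c; exact (mul_pos (hp_pos c) (hw c).1).le
    · exact hwsum
  have hdiv : ∀ c, p c * w c / p c = w c := fun c =>
    mul_div_cancel_left₀ (w c) (hp_pos c).ne'
  have hqstar : fDivE f (fun c => p c * w c) p - ((∑ c, v c * (p c * w c) : ℝ) : EReal)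
      = (((∑ c, p c * g (w c)) - ∑ c, v c * (p c * w c) : ℝ) : EReal) := by
    have : fDivE f (fun c => p c * w c) p = ((∑ c, p c * g (w c) : ℝ) : EReal) := by
      rw [fDivE, er_coe_sum]
      refine Finset.sum_congr rfl (fun c _ => ?_)
      rw [hdiv c, hcoe (w c) (hw c).1, ← EReal.coe_mul]
    rw [this, ← EReal.coe_sub]
  have key : ∀ q : Fin C → ℝ, q ∈ simplex C →
      (∑ c, p c * (g (w c) + f' (w c) * (q c / p c - w c))) - (∑ c, v c * q c)
        = (∑ c, p c * g (w c)) - ∑ c, v c * (p c * w c) := by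
    intro q hq
    have e0 : ∀ c, p c * (g (w c) + f' (w c) * (q c / p c - w c))
        = p c * g (w c) + (γ + v c) * q c - (γ + v c) * (p c * w c) := by
      intro c
      rw [(hw c).2]
      have hp' : p c ≠ 0 := (hp_pos c).ne'
      field_simp
      ring
    rw [Finset.sum_congr rfl (fun c _ => e0 c)]
    have e1 : ∀ u : Fin C → ℝ, ∑ c, (γ + v c) * u c = γ * (∑ c, u c) + ∑ c, v c * u c := by
      intro u
      rw [Finset.mul_sum, ← Finset.sum_add_distrib]
      exact Finset.sum_congr rfl (fun c _ => by ring)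
    rw [Finset.sum_sub_distrib, Finset.sum_add_distrib, e1, e1, hq.2, hwsum]
    ring
  have hterm_le : ∀ q : Fin C → ℝ, q ∈ simplex C → ∀ c,
      ((p c * (g (w c) + f' (w c) * (q c / p c - w c)) : ℝ) : EReal)
        ≤ (p c : EReal) * f (q c / p c) := by
    intro q hq c
    exact er_mul_le (hp_pos c)
      (aux_grad_le hf_real hconv hderiv hf_zero (hw c).1
        (div_nonneg (hq.1 c) (hp_pos c).le))
  refine ⟨hmem, ?_, ?_⟩
  · intro q hq
    rw [hqstar]
    have hsum : ((∑ c, p c * (g (w c) + f' (w c) * (q c / p c - w c)) : ℝ) : EReal)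
        ≤ fDivE f q p := by
      rw [er_coe_sum]
      exact Finset.sum_le_sum (fun c _ => hterm_le q hq c)
    calc ((((∑ c, p c * g (w c)) - ∑ c, v c * (p c * w c) : ℝ)) : EReal)
        = (((∑ c, p c * (g (w c) + f' (w c) * (q c / p c - w c))) - (∑ c, v c * q c) : ℝ) : EReal) := by
          rw [key q hq]
      _ = ((∑ c, p c * (g (w c) + f' (w c) * (q c / p c - w c)) : ℝ) : EReal)
            - ((∑ c, v c * q c : ℝ) : EReal) := by rw [EReal.coe_sub]
      _ ≤ fDivE f q p - ((∑ c, v c * q c : ℝ) : EReal) := EReal.sub_le_sub hsum le_rfl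
  · intro q hq hne
    rw [hqstar]
    obtain ⟨c0, hc0⟩ : ∃ c0, q c0 ≠ p c0 * w c0 := by
      by_contra h
      push_neg at h
      exact hne (funext h)
    have hx0 : q c0 / p c0 ≠ w c0 := by
      intro h
      apply hc0
      rw [← h, mul_div_cancel₀ _ (hp_pos c0).ne']
    have hlt0 : ((p c0 * (g (w c0) + f' (w c0) * (q c0 / p c0 - w c0)) : ℝ) : EReal)
        < (p c0 : EReal) * f (q c0 / p c0) :=
      er_mul_lt (hp_pos c0)
        (aux_grad_lt hf_real hconv hderiv hf_zero (hw c0).1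
          (div_nonneg (hq.1 c0) (hp_pos c0).le) hx0)
    set T : Fin C → ℝ := fun c => p c * (g (w c) + f' (w c) * (q c / p c - w c)) with hT
    have hrest : ((∑ c ∈ Finset.univ.erase c0, T c : ℝ) : EReal)
        ≤ ∑ c ∈ Finset.univ.erase c0, (p c : EReal) * f (q c / p c) := by
      rw [er_coe_sum]
      exact Finset.sum_le_sum (fun c _ => hterm_le q hq c)
    have hsum_lt : ((∑ c, T c : ℝ) : EReal) < fDivE f q p := by
      rw [← Finset.add_sum_erase Finset.univ T (Finset.mem_univ c0), EReal.coe_add]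
      rw [fDivE, ← Finset.add_sum_erase Finset.univ (fun c => (p c : EReal) * f (q c / p c))
        (Finset.mem_univ c0)]
      refine EReal.add_lt_add_of_lt_of_le' hlt0 hrest ?_ ?_
      · exact ((EReal.bot_lt_coe _).trans_le hrest).ne'
      · intro _ hz
        exact absurd hz (EReal.coe_ne_top _)
    calc ((((∑ c, p c * g (w c)) - ∑ c, v c * (p c * w c) : ℝ)) : EReal)
        = (((∑ c, T c) - (∑ c, v c * q c) : ℝ) : EReal) := by rw [hT, key q hq]
      _ = ((∑ c, T c : ℝ) : EReal) - ((∑ c, v c * q c : ℝ) : EReal) := by rw [EReal.coe_sub]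
      _ < fDivE f q p - ((∑ c, v c * q c : ℝ) : EReal) := by
          exact EReal.sub_lt_sub_of_lt_of_le hsum_lt le_rfl
            (EReal.coe_ne_bot _) (EReal.coe_ne_top _)

lemma aux_gamma_exists {C : ℕ} (hC : 0 < C)
    (hmono : StrictMonoOn f' (Ioi (0:ℝ)))
    (hf'_cont : ContinuousOn f' (Set.Ioi 0))
    (hf'_atBot : Filter.Tendsto f' (nhdsWithin 0 (Set.Ioi 0)) Filter.atBot)
    (p : Fin C → ℝ) (hp_pos : ∀ c, 0 < p c) (hp_sum : ∑ c, p c = 1)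
    (v : Fin C → ℝ) :
    ∃ γ : ℝ, ∃ w : Fin C → ℝ,
      (∀ c, 0 < w c ∧ f' (w c) = γ + v c) ∧ ∑ c, p c * w c = 1 := by
  classical
  set R : Set ℝ := f' '' Ioi 0 with hR
  have hconn : OrdConnected R :=
    ((isPreconnected_Ioi).image f' hf'_cont).ordConnected
  haveI : OrdConnected R := hconn
  set iso := StrictMonoOn.orderIso f' (Ioi (0:ℝ)) hmono with hiso
  have hiso_apply : ∀ x : Ioi (0:ℝ), ((iso x : ↥R) : ℝ) = f' x := fun x => rfl
  set G : ℝ → ℝ := fun y => if h : y ∈ R then ((iso.symm ⟨y, h⟩ : ↥(Ioi (0:ℝ))) : ℝ) else 1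
    with hG
  have hGpos : ∀ y ∈ R, 0 < G y := by
    intro y hy
    rw [hG]; simp only [dif_pos hy]
    exact (iso.symm ⟨y, hy⟩).2
  have hGfix : ∀ y, ∀ h : y ∈ R, f' (G y) = y := by
    intro y hy
    rw [hG]; simp only [dif_pos hy]
    have := iso.apply_symm_apply ⟨y, hy⟩
    have h2 := congrArg (Subtype.val) this
    rw [hiso_apply] at h2
    exact h2
  have hGf' : ∀ t : ℝ, 0 < t → G (f' t) = t := by
    intro t ht
    have hmem : f' t ∈ R := ⟨t, ht, rfl⟩
    exact hmono.injOn (hGpos _ hmem) ht (hGfix _ hmem)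
  have hGcont : ContinuousOn G R := by
    rw [continuousOn_iff_continuous_restrict]
    have : R.domRestrict G = fun y : R => ((iso.symm y : ↥(Ioi (0:ℝ))) : ℝ) := by
      funext y
      simp only [domRestrict_apply, hG, dif_pos y.2, Subtype.coe_eta]
    rw [this]
    exact continuous_subtype_val.comp iso.symm.continuous
  have hGmono : ∀ y₁ ∈ R, ∀ y₂ ∈ R, y₁ ≤ y₂ → G y₁ ≤ G y₂ := by
    intro y₁ h₁ y₂ h₂ h
    by_contra hlt
    push_neg at hlt
    have := hmono (mem_Ioi.2 (hGpos _ h₂)) (mem_Ioi.2 (hGpos _ h₁)) hlt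
    rw [hGfix _ h₁, hGfix _ h₂] at this
    exact absurd this (not_lt.2 h)
  have hlow : ∀ b ∈ R, ∀ y : ℝ, y ≤ b → y ∈ R := by
    intro b hb y hy
    obtain ⟨t, htle, ht0⟩ :=
      ((hf'_atBot.eventually (eventually_le_atBot y)).and self_mem_nhdsWithin).exists
    exact hconn.out ⟨t, ht0, rfl⟩ hb ⟨htle, hy⟩
  obtain ⟨c0, -, hc0⟩ := Finset.exists_max_image Finset.univ v ⟨⟨0, hC⟩, Finset.mem_univ _⟩
  have hp0 : 0 < p c0 := hp_pos c0
  have hple : p c0 ≤ 1 := by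
    rw [← hp_sum]
    exact Finset.single_le_sum (fun c _ => (hp_pos c).le) (Finset.mem_univ c0)
  obtain ⟨T, hT⟩ : ∃ T : ℝ, T = 1 / p c0 + 1 := ⟨_, rfl⟩
  have hT2 : 2 ≤ T := by
    have : (1:ℝ) ≤ 1 / p c0 := by
      rw [le_div_iff₀ hp0]; linarith
    linarith
  have hT0 : (0:ℝ) < T := by linarith
  have hhalf : (0:ℝ) < 1/2 := by norm_num
  have hfT_mem : f' T ∈ R := ⟨T, hT0, rfl⟩
  have hfh_mem : f' (1/2) ∈ R := ⟨1/2, hhalf, rfl⟩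
  have hfhT : f' (1/2 : ℝ) ≤ f' T :=
    (hmono (mem_Ioi.2 hhalf) (mem_Ioi.2 hT0) (by linarith)).le
  obtain ⟨γ0, hγ0⟩ : ∃ x : ℝ, x = f' (1/2) - v c0 := ⟨_, rfl⟩
  obtain ⟨γ1, hγ1⟩ : ∃ x : ℝ, x = f' T - v c0 := ⟨_, rfl⟩
  have hγ01 : γ0 ≤ γ1 := by rw [hγ0, hγ1]; linarith
  have hmemR : ∀ γ ∈ Icc γ0 γ1, ∀ c, γ + v c ∈ R := by
    intro γ hγ c
    refine hlow _ hfT_mem _ ?_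
    have h1 : γ ≤ γ1 := hγ.2
    have h2 : v c ≤ v c0 := hc0 c (Finset.mem_univ c)
    rw [hγ1] at h1
    linarith
  set F : ℝ → ℝ := fun γ => ∑ c, p c * G (γ + v c) with hF
  have hFcont : ContinuousOn F (Icc γ0 γ1) := by
    apply continuousOn_finset_sum
    intro c _
    apply ContinuousOn.mul continuousOn_const
    exact hGcont.comp ((continuous_id.add continuous_const).continuousOn)
      (fun γ hγ => hmemR γ hγ c)
  have hF0 : F γ0 ≤ 1/2 := by
    have hle : ∀ c, G (γ0 + v c) ≤ 1/2 := by
      intro c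
      have h1 : γ0 + v c ≤ f' (1/2) := by
        have := hc0 c (Finset.mem_univ c); rw [hγ0]; linarith
      have := hGmono _ (hmemR γ0 ⟨le_rfl, hγ01⟩ c) _ hfh_mem h1
      rwa [hGf' _ hhalf] at this
    calc F γ0 ≤ ∑ c, p c * (1/2) :=
          Finset.sum_le_sum (fun c _ => mul_le_mul_of_nonneg_left (hle c) (hp_pos c).le)
      _ = 1/2 := by rw [← Finset.sum_mul, hp_sum, one_mul]
  have hF1 : 1 < F γ1 := by
    have hterm : p c0 * G (γ1 + v c0) = 1 + p c0 := by
      have : γ1 + v c0 = f' T := by rw [hγ1]; ring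
      rw [this, hGf' _ hT0, hT]
      field_simp
    have hsingle : p c0 * G (γ1 + v c0) ≤ F γ1 :=
      Finset.single_le_sum
        (fun c _ => (mul_pos (hp_pos c) (hGpos _ (hmemR γ1 ⟨hγ01, le_rfl⟩ c))).le)
        (Finset.mem_univ c0)
    rw [hterm] at hsingle
    linarith
  have hIVT := intermediate_value_Icc hγ01 hFcont
  have h1mem : (1:ℝ) ∈ Icc (F γ0) (F γ1) := ⟨by linarith, hF1.le⟩
  obtain ⟨γ, hγmem, hFγ⟩ := hIVT h1mem
  refine ⟨γ, fun c => G (γ + v c), fun c => ⟨hGpos _ (hmemR γ hγmem c),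
    hGfix _ (hmemR γ hγmem c)⟩, hFγ⟩

lemma aux_gamma_unique {C : ℕ} (hC : 0 < C)
    (hmono : StrictMonoOn f' (Ioi (0:ℝ)))
    (p : Fin C → ℝ) (hp_pos : ∀ c, 0 < p c)
    (v : Fin C → ℝ) {γ γ' : ℝ} {w w' : Fin C → ℝ}
    (hw : ∀ c, 0 < w c ∧ f' (w c) = γ + v c) (hwsum : ∑ c, p c * w c = 1)
    (hw' : ∀ c, 0 < w' c ∧ f' (w' c) = γ' + v c) (hwsum' : ∑ c, p c * w' c = 1) :
    γ = γ' := by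
  by_contra hne
  have key : ∀ (a b : ℝ) (u u' : Fin C → ℝ),
      (∀ c, 0 < u c ∧ f' (u c) = a + v c) → (∑ c, p c * u c = 1) →
      (∀ c, 0 < u' c ∧ f' (u' c) = b + v c) → (∑ c, p c * u' c = 1) →
      a < b → False := by
    intro a b u u' hu husum hu' husum' hab
    have hlt : ∀ c, u c < u' c := by
      intro c
      have h1 : f' (u c) < f' (u' c) := by
        rw [(hu c).2, (hu' c).2]; linarith
      by_contra hge
      push_neg at hge
      rcases hge.lt_or_eq with h | h
      · exact absurd (hmono (mem_Ioi.2 (hu' c).1) (mem_Ioi.2 (hu c).1) h) (by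
          rw [(hu c).2, (hu' c).2]; intro hh; linarith)
      · rw [h] at h1; exact lt_irrefl _ h1
    have : (1:ℝ) < 1 := by
      calc (1:ℝ) = ∑ c, p c * u c := husum.symm
        _ < ∑ c, p c * u' c := Finset.sum_lt_sum_of_nonempty
            ⟨⟨0, hC⟩, Finset.mem_univ _⟩
            (fun c _ => mul_lt_mul_of_pos_left (hlt c) (hp_pos c))
        _ = 1 := husum'
    exact lt_irrefl _ this
  rcases Ne.lt_or_gt hne with h | h
  · exact key γ γ' w w' hw hwsum hw' hwsum' h
  · exact key γ' γ w' w hw' hwsum' hw hwsum h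

end Aux

/-- Lemma 4 of the ISIT paper: for a strictly convex
`f : [0,∞) → ℝ ∪ {∞}`, continuously differentiable on `(0,∞)` (derivative `f'`),
real-valued on `(0,∞)`, with `f(0) = lim_{t→0⁺} f(t)`, `f(1) = 0`, and
`f'(t) → −∞` as `t → 0⁺`, and for `p ∈ Δ_C⁺`, `v ∈ ℝ^C`: there is a unique
`γ ∈ ℝ` such that each `γ + v_c` lies in the range of `f'` (on `(0,∞)`) and
`∑_c p_c φ(γ + v_c) = 1` (here `w c = φ(γ + v_c)` is encoded by `w c > 0` with
`f'(w c) = γ + v_c`); moreover `q ↦ D_f(q‖p) − vᵀq` has a unique minimizer `q*`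
over `Δ_C`, given by `q*_c = p_c φ(γ + v_c)`. -/
theorem tilt_minimizer (C : ℕ) (hC : 0 < C)
    (f : ℝ → EReal) (f' : ℝ → ℝ)
    (hf_real : ∀ t : ℝ, 0 < t → ∃ y : ℝ, f t = (y : EReal))
    (hf_strict_conv : ∀ x ∈ Set.Ici (0 : ℝ), ∀ y ∈ Set.Ici (0 : ℝ), x ≠ y →
      ∀ s t : ℝ, 0 < s → 0 < t → s + t = 1 →
        f (s * x + t * y) < (s : EReal) * f x + (t : EReal) * f y)
    (hf_deriv : ∀ t : ℝ, 0 < t → HasDerivAt (fun u => (f u).toReal) (f' t) t)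
    (hf'_cont : ContinuousOn f' (Set.Ioi 0))
    (hf_zero : Filter.Tendsto f (nhdsWithin 0 (Set.Ioi 0)) (nhds (f 0)))
    (hf_one : f 1 = 0)
    (hf'_atBot : Filter.Tendsto f' (nhdsWithin 0 (Set.Ioi 0)) Filter.atBot)
    (p : Fin C → ℝ) (hp_pos : ∀ c, 0 < p c) (hp_sum : ∑ c, p c = 1)
    (v : Fin C → ℝ) :
    (∃! γ : ℝ, ∃ w : Fin C → ℝ,
      (∀ c, 0 < w c ∧ f' (w c) = γ + v c) ∧ ∑ c, p c * w c = 1) ∧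
    (∃! q : Fin C → ℝ, q ∈ simplex C ∧
      IsMinOn (fun q' : Fin C → ℝ =>
          fDivE f q' p - ((∑ c, v c * q' c : ℝ) : EReal)) (simplex C) q) ∧
    (∀ (q : Fin C → ℝ) (γ : ℝ) (w : Fin C → ℝ),
      q ∈ simplex C →
      IsMinOn (fun q' : Fin C → ℝ =>
          fDivE f q' p - ((∑ c, v c * q' c : ℝ) : EReal)) (simplex C) q →
      ((∀ c, 0 < w c ∧ f' (w c) = γ + v c) ∧ ∑ c, p c * w c = 1) →
      ∀ c, q c = p c * w c) := by
  have hconv : StrictConvexOn ℝ (Set.Ioi (0:ℝ)) (fun t => (f t).toReal) :=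
    aux_strictConvexOn hf_real hf_strict_conv
  have hmono : StrictMonoOn f' (Set.Ioi (0:ℝ)) := aux_strictMono hconv hf_deriv
  obtain ⟨γ, w, hw, hwsum⟩ := aux_gamma_exists hC hmono hf'_cont hf'_atBot p hp_pos hp_sum v
  -- the key consequence of aux_min, for an arbitrary valid pair (γ', w')
  have main : ∀ (γ' : ℝ) (w' : Fin C → ℝ),
      (∀ c, 0 < w' c ∧ f' (w' c) = γ' + v c) → (∑ c, p c * w' c = 1) →
      (fun c => p c * w' c) ∈ simplex C ∧
      IsMinOn (fun q' : Fin C → ℝ =>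
          fDivE f q' p - ((∑ c, v c * q' c : ℝ) : EReal)) (simplex C)
        (fun c => p c * w' c) ∧
      (∀ q ∈ simplex C,
        IsMinOn (fun q' : Fin C → ℝ =>
            fDivE f q' p - ((∑ c, v c * q' c : ℝ) : EReal)) (simplex C) q →
        q = fun c => p c * w' c) := by
    intro γ' w' hw' hwsum'
    obtain ⟨hmem, hle, hlt⟩ := aux_min hf_real hconv hf_deriv hf_zero p hp_pos v γ' w' hw' hwsum'
    refine ⟨hmem, ?_, ?_⟩
    · exact isMinOn_iff.mpr (fun x hx => hle x hx)
    · intro q hq hqmin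
      by_contra hne
      have h1 := hlt q hq hne
      have h2 := isMinOn_iff.mp hqmin _ hmem
      exact absurd (h1.trans_le h2) (lt_irrefl _)
  obtain ⟨hmem, hmin, huniq⟩ := main γ w hw hwsum
  refine ⟨⟨γ, ⟨w, hw, hwsum⟩, ?_⟩, ⟨(fun c => p c * w c), ⟨hmem, hmin⟩, ?_⟩, ?_⟩
  · rintro γ' ⟨w', hw', hwsum'⟩
    exact (aux_gamma_unique hC hmono p hp_pos v hw' hwsum' hw hwsum)
  · rintro q ⟨hq, hqmin⟩
    exact huniq q hq hqmin
  · rintro q γ' w' hq hqmin ⟨hw', hwsum'⟩ c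
    obtain ⟨-, -, huniq'⟩ := main γ' w' hw' hwsum'
    have := huniq' q hq hqmin
    rw [this]
end

section
/- For every positive integer n and all z, z′ ∈ ℝ^n, ‖σ(z) − σ(z′)‖₂ ≤ (1/2) ‖z − z′‖₂; that is, the softmax function σ is 1/2-Lipschitz with respect to the Euclidean norm. -/
open Finset

/-- The softmax function `σ : ℝⁿ → ℝⁿ`, `σ(z)_j = e^{z_j} / ∑_i e^{z_i}`. -/
noncomputable def softmax {n : ℕ} (z : Fin n → ℝ) : Fin n → ℝ :=
  fun j => Real.exp (z j) / ∑ i, Real.exp (z i)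

private lemma sum_center {n : ℕ} (p v : Fin n → ℝ) (hp1 : ∑ j, p j = 1) (c : ℝ) :
    ∑ j, p j * (v j - c) ^ 2
      = (∑ j, p j * v j ^ 2 - (∑ j, p j * v j) ^ 2) + ((∑ j, p j * v j) - c) ^ 2 := by
  have h : ∀ j ∈ Finset.univ, p j * (v j - c) ^ 2
      = p j * v j ^ 2 - (2 * c) * (p j * v j) + c ^ 2 * p j := fun j _ => by ring
  rw [Finset.sum_congr rfl h, Finset.sum_add_distrib, Finset.sum_sub_distrib,
    ← Finset.mul_sum, ← Finset.mul_sum, hp1]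
  ring

private lemma var_nonneg {n : ℕ} (p v : Fin n → ℝ) (hp : ∀ j, 0 ≤ p j)
    (hp1 : ∑ j, p j = 1) :
    0 ≤ ∑ j, p j * v j ^ 2 - (∑ j, p j * v j) ^ 2 := by
  have h2 : (0:ℝ) ≤ ∑ j, p j * (v j - ∑ i, p i * v i) ^ 2 :=
    Finset.sum_nonneg fun j _ => mul_nonneg (hp j) (sq_nonneg _)
  rw [sum_center p v hp1, sub_self] at h2
  simpa using h2

private lemma var_le_half {n : ℕ} (hn : 0 < n) (p v : Fin n → ℝ) (hp : ∀ j, 0 ≤ p j)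
    (hp1 : ∑ j, p j = 1) :
    ∑ j, p j * v j ^ 2 - (∑ j, p j * v j) ^ 2 ≤ (1 / 2) * ∑ j, v j ^ 2 := by
  have hne : (Finset.univ : Finset (Fin n)).Nonempty := ⟨⟨0, hn⟩, Finset.mem_univ _⟩
  obtain ⟨k, -, hk⟩ := Finset.exists_max_image Finset.univ v hne
  obtain ⟨l, -, hl⟩ := Finset.exists_min_image Finset.univ v hne
  set c := (v k + v l) / 2 with hc
  have step1 : ∑ j, p j * v j ^ 2 - (∑ j, p j * v j) ^ 2 ≤ ∑ j, p j * (v j - c) ^ 2 := by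
    rw [sum_center p v hp1 c]; nlinarith [sq_nonneg ((∑ j, p j * v j) - c)]
  have step2 : ∑ j, p j * (v j - c) ^ 2 ≤ ((v k - v l) / 2) ^ 2 := by
    calc ∑ j, p j * (v j - c) ^ 2 ≤ ∑ j, p j * ((v k - v l) / 2) ^ 2 := by
          apply Finset.sum_le_sum
          intro j _
          have h1 := hk j (Finset.mem_univ j)
          have h2 := hl j (Finset.mem_univ j)
          have h3 : (v j - c) ^ 2 ≤ ((v k - v l) / 2) ^ 2 := by
            rw [hc]; nlinarith
          exact mul_le_mul_of_nonneg_left h3 (hp j)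
      _ = ((v k - v l) / 2) ^ 2 := by rw [← Finset.sum_mul, hp1, one_mul]
  have step3 : ((v k - v l) / 2) ^ 2 ≤ (1 / 2) * ∑ j, v j ^ 2 := by
    by_cases hkl : k = l
    · rw [hkl]
      have : (0:ℝ) ≤ ∑ j, v j ^ 2 := Finset.sum_nonneg fun j _ => sq_nonneg _
      simp only [sub_self]
      norm_num
      linarith
    · have hsum : v k ^ 2 + v l ^ 2 ≤ ∑ j, v j ^ 2 := by
        have hpair := Finset.sum_pair (f := fun j => v j ^ 2) hkl
        rw [← hpair]
        exact Finset.sum_le_sum_of_subset_of_nonneg (Finset.subset_univ _)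
          fun j _ _ => sq_nonneg _
      nlinarith [sq_nonneg (v k + v l), sq_nonneg (v k - v l)]
  linarith

private lemma cov_sq_le {n : ℕ} (p u v : Fin n → ℝ) (hp : ∀ j, 0 ≤ p j)
    (hp1 : ∑ j, p j = 1) :
    ((∑ j, p j * (u j * v j)) - (∑ j, p j * u j) * (∑ j, p j * v j)) ^ 2
      ≤ (∑ j, p j * u j ^ 2 - (∑ j, p j * u j) ^ 2)
        * (∑ j, p j * v j ^ 2 - (∑ j, p j * v j) ^ 2) := by
  set ub := ∑ j, p j * u j with hub
  set vb := ∑ j, p j * v j with hvb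
  have key := Finset.sum_mul_sq_le_sq_mul_sq Finset.univ
      (fun j => Real.sqrt (p j) * (u j - ub)) (fun j => Real.sqrt (p j) * (v j - vb))
  have e1 : ∑ j, (Real.sqrt (p j) * (u j - ub)) * (Real.sqrt (p j) * (v j - vb))
      = (∑ j, p j * (u j * v j)) - ub * vb := by
    have h : ∀ j ∈ Finset.univ, (Real.sqrt (p j) * (u j - ub)) * (Real.sqrt (p j) * (v j - vb))
        = p j * (u j * v j) - vb * (p j * u j) - ub * (p j * v j) + (ub * vb) * p j := by
      intro j _
      rw [show (Real.sqrt (p j) * (u j - ub)) * (Real.sqrt (p j) * (v j - vb))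
          = (Real.sqrt (p j) * Real.sqrt (p j)) * ((u j - ub) * (v j - vb)) by ring,
        Real.mul_self_sqrt (hp j)]
      ring
    rw [Finset.sum_congr rfl h, Finset.sum_add_distrib, Finset.sum_sub_distrib,
      Finset.sum_sub_distrib, ← Finset.mul_sum, ← Finset.mul_sum, ← Finset.mul_sum, hp1,
      ← hub, ← hvb]
    ring
  have e2 : ∀ (w : Fin n → ℝ), ∑ j, (Real.sqrt (p j) * (w j - ∑ i, p i * w i)) ^ 2
      = ∑ j, p j * w j ^ 2 - (∑ j, p j * w j) ^ 2 := by
    intro w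
    have h : ∀ j ∈ Finset.univ, (Real.sqrt (p j) * (w j - ∑ i, p i * w i)) ^ 2
        = p j * (w j - ∑ i, p i * w i) ^ 2 := by
      intro j _
      rw [mul_pow, Real.sq_sqrt (hp j)]
    rw [Finset.sum_congr rfl h, sum_center p w hp1, sub_self]
    simp
  rw [e1, e2 u, e2 v] at key
  exact key

private lemma cov_abs_le {n : ℕ} (hn : 0 < n) (p u v : Fin n → ℝ) (hp : ∀ j, 0 ≤ p j)
    (hp1 : ∑ j, p j = 1) :
    |(∑ j, p j * (u j * v j)) - (∑ j, p j * u j) * (∑ j, p j * v j)|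
      ≤ (1 / 2) * (Real.sqrt (∑ j, u j ^ 2) * Real.sqrt (∑ j, v j ^ 2)) := by
  have h1 := cov_sq_le p u v hp hp1
  have h2 := var_le_half hn p u hp hp1
  have h3 := var_le_half hn p v hp hp1
  have h4 := var_nonneg p u hp hp1
  have h5 := var_nonneg p v hp hp1
  have hu0 : (0:ℝ) ≤ ∑ j, u j ^ 2 := Finset.sum_nonneg fun j _ => sq_nonneg _
  have hv0 : (0:ℝ) ≤ ∑ j, v j ^ 2 := Finset.sum_nonneg fun j _ => sq_nonneg _
  have h6 : ((∑ j, p j * (u j * v j)) - (∑ j, p j * u j) * (∑ j, p j * v j)) ^ 2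
      ≤ ((1/2) * ∑ j, u j ^ 2) * ((1/2) * ∑ j, v j ^ 2) :=
    le_trans h1 (mul_le_mul h2 h3 h5 (by positivity))
  have h7 := Real.abs_le_sqrt h6
  calc |(∑ j, p j * (u j * v j)) - (∑ j, p j * u j) * (∑ j, p j * v j)|
      ≤ Real.sqrt (((1/2) * ∑ j, u j ^ 2) * ((1/2) * ∑ j, v j ^ 2)) := h7
    _ = (1 / 2) * (Real.sqrt (∑ j, u j ^ 2) * Real.sqrt (∑ j, v j ^ 2)) := by
        rw [show ((1/2) * ∑ j, u j ^ 2) * ((1/2) * ∑ j, v j ^ 2)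
            = (1/2)^2 * ((∑ j, u j ^ 2) * ∑ j, v j ^ 2) by ring,
          Real.sqrt_mul (by positivity), Real.sqrt_sq (by norm_num),
          Real.sqrt_mul hu0]

private lemma softmax_path_hasDerivAt {n : ℕ} (hn : 0 < n) (z' d w : Fin n → ℝ) (t : ℝ) :
    HasDerivAt
      (fun s => ∑ j, w j * (Real.exp (z' j + s * d j) / ∑ i, Real.exp (z' i + s * d i)))
      ((∑ j, softmax (fun i => z' i + t * d i) j * (d j * w j)) -
        (∑ j, softmax (fun i => z' i + t * d i) j * d j) *
          (∑ j, softmax (fun i => z' i + t * d i) j * w j)) t := by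
  have hS : 0 < ∑ i, Real.exp (z' i + t * d i) :=
    Finset.sum_pos (fun i _ => Real.exp_pos _) ⟨⟨0, hn⟩, Finset.mem_univ _⟩
  have hexp : ∀ i : Fin n, HasDerivAt (fun s : ℝ => Real.exp (z' i + s * d i))
      (Real.exp (z' i + t * d i) * d i) t :=
    fun i => ((hasDerivAt_mul_const (d i)).const_add (z' i)).exp
  have hSder : HasDerivAt (fun s : ℝ => ∑ i, Real.exp (z' i + s * d i))
      (∑ i, Real.exp (z' i + t * d i) * d i) t :=
    HasDerivAt.fun_sum fun i _ => hexp i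
  have hg : HasDerivAt
      (fun s => ∑ j, w j * (Real.exp (z' j + s * d j) / ∑ i, Real.exp (z' i + s * d i)))
      (∑ j, w j * ((Real.exp (z' j + t * d j) * d j * (∑ i, Real.exp (z' i + t * d i))
          - Real.exp (z' j + t * d j) * ∑ i, Real.exp (z' i + t * d i) * d i)
          / (∑ i, Real.exp (z' i + t * d i)) ^ 2)) t :=
    HasDerivAt.fun_sum fun j _ => ((hexp j).div hSder hS.ne').const_mul (w j)
  convert hg using 1
  have hq : ∀ j, softmax (fun i => z' i + t * d i) j
      = Real.exp (z' j + t * d j) / ∑ i, Real.exp (z' i + t * d i) := fun j => rfl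
  have hM : (∑ i, Real.exp (z' i + t * d i) * d i) / (∑ i, Real.exp (z' i + t * d i))
      = ∑ i, softmax (fun i => z' i + t * d i) i * d i := by
    rw [Finset.sum_div]
    exact Finset.sum_congr rfl fun i _ => by rw [hq i, div_mul_eq_mul_div]
  have hterm : ∀ j ∈ Finset.univ,
      w j * ((Real.exp (z' j + t * d j) * d j * (∑ i, Real.exp (z' i + t * d i))
          - Real.exp (z' j + t * d j) * ∑ i, Real.exp (z' i + t * d i) * d i)
          / (∑ i, Real.exp (z' i + t * d i)) ^ 2)
      = softmax (fun i => z' i + t * d i) j * (d j * w j)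
        - (softmax (fun i => z' i + t * d i) j * w j)
            * ((∑ i, Real.exp (z' i + t * d i) * d i) / (∑ i, Real.exp (z' i + t * d i))) := by
    intro j _
    rw [hq j]
    field_simp
  rw [Finset.sum_congr rfl hterm, Finset.sum_sub_distrib, ← Finset.sum_mul, hM]
  ring

/-- the softmax function is `1/2`-Lipschitz with respect to the
Euclidean (`ℓ²`) norm. -/
theorem softmax_half_lipschitz (n : ℕ) (hn : 0 < n) (z z' : Fin n → ℝ) :
    Real.sqrt (∑ j, (softmax z j - softmax z' j) ^ 2) ≤
      (1 / 2) * Real.sqrt (∑ j, (z j - z' j) ^ 2) := by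
  set d : Fin n → ℝ := fun j => z j - z' j with hd
  set w : Fin n → ℝ := fun j => softmax z j - softmax z' j with hw
  set g : ℝ → ℝ :=
    fun s => ∑ j, w j * (Real.exp (z' j + s * d j) / ∑ i, Real.exp (z' i + s * d i)) with hg
  set C : ℝ := (1 / 2) * (Real.sqrt (∑ j, d j ^ 2) * Real.sqrt (∑ j, w j ^ 2)) with hC
  -- derivative bound
  have hbound : ∀ s : ℝ, |(∑ j, softmax (fun i => z' i + s * d i) j * (d j * w j)) -
      (∑ j, softmax (fun i => z' i + s * d i) j * d j) *
        (∑ j, softmax (fun i => z' i + s * d i) j * w j)| ≤ C := by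
    intro s
    have hS : 0 < ∑ i, Real.exp (z' i + s * d i) :=
      Finset.sum_pos (fun i _ => Real.exp_pos _) ⟨⟨0, hn⟩, Finset.mem_univ _⟩
    have hp : ∀ j, 0 ≤ softmax (fun i => z' i + s * d i) j :=
      fun j => div_nonneg (Real.exp_pos _).le hS.le
    have hp1 : ∑ j, softmax (fun i => z' i + s * d i) j = 1 := by
      unfold softmax
      rw [← Finset.sum_div, div_self hS.ne']
    exact cov_abs_le hn _ d w hp hp1
  -- mean value inequality
  have hmv : ‖g 1 - g 0‖ ≤ C := by
    apply norm_image_sub_le_of_norm_deriv_le_segment_01'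
      (f' := fun s => (∑ j, softmax (fun i => z' i + s * d i) j * (d j * w j)) -
        (∑ j, softmax (fun i => z' i + s * d i) j * d j) *
          (∑ j, softmax (fun i => z' i + s * d i) j * w j))
    · intro x _
      exact (softmax_path_hasDerivAt hn z' d w x).hasDerivWithinAt
    · intro x _
      rw [Real.norm_eq_abs]
      exact hbound x
  -- identify g 1 - g 0
  have h1 : g 1 = ∑ j, w j * softmax z j := by
    rw [hg]
    have e : ∀ j, z' j + 1 * d j = z j := fun j => by rw [hd]; ring
    simp only [e]
    rfl
  have h0 : g 0 = ∑ j, w j * softmax z' j := by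
    rw [hg]
    have e : ∀ j, z' j + 0 * d j = z' j := fun j => by rw [hd]; ring
    simp only [e]
    rfl
  have hdiff : g 1 - g 0 = ∑ j, w j ^ 2 := by
    rw [h1, h0, ← Finset.sum_sub_distrib]
    exact Finset.sum_congr rfl fun j _ => by rw [hw]; ring
  have hfin : ∑ j, w j ^ 2 ≤ C := by
    rw [← hdiff]
    calc g 1 - g 0 ≤ |g 1 - g 0| := le_abs_self _
      _ ≤ C := by rwa [Real.norm_eq_abs] at hmv
  -- conclude
  have hw0 : (0:ℝ) ≤ ∑ j, w j ^ 2 := Finset.sum_nonneg fun j _ => sq_nonneg _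
  have hsq : Real.sqrt (∑ j, w j ^ 2) ^ 2 = ∑ j, w j ^ 2 := Real.sq_sqrt hw0
  have hA : 0 ≤ Real.sqrt (∑ j, w j ^ 2) := Real.sqrt_nonneg _
  rcases eq_or_lt_of_le hA with hA0 | hA0
  · rw [← hA0]
    positivity
  · have : Real.sqrt (∑ j, w j ^ 2) ^ 2
        ≤ (1 / 2) * (Real.sqrt (∑ j, d j ^ 2) * Real.sqrt (∑ j, w j ^ 2)) := by
      rw [hsq]; exact hfin
    nlinarith [this, hA0]
end

section
/- For every positive integer n and every x in the probability simplex Δ_n, writing s_k(x) := Σ_{i=1}^n x_i^k, one has s₂(x)² + s₂(x) − 2 s₃(x) ≤ 1/4. -/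
/-- for every `x` in the probability simplex `Δ_n`, writing
`s_k(x) = ∑_i x_i^k`, one has `s₂(x)² + s₂(x) − 2 s₃(x) ≤ 1/4`. -/
theorem power_sum_bound (n : ℕ) (hn : 0 < n) (x : Fin n → ℝ)
    (hx_nonneg : ∀ i, 0 ≤ x i) (hx_sum : ∑ i, x i = 1) :
    (∑ i, x i ^ 2) ^ 2 + (∑ i, x i ^ 2) - 2 * ∑ i, x i ^ 3 ≤ 1 / 4 := by
  -- Cauchy-Schwarz: (∑ x²)² ≤ (∑ x³)(∑ x) = ∑ x³
  have hCS : (∑ i, x i ^ 2) ^ 2 ≤ ∑ i, x i ^ 3 := by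
    have h := Finset.sum_mul_sq_le_sq_mul_sq Finset.univ
      (fun i => x i * Real.sqrt (x i)) (fun i => Real.sqrt (x i))
    have e1 : ∀ i, (x i * Real.sqrt (x i)) * Real.sqrt (x i) = x i ^ 2 := by
      intro i
      rw [mul_assoc, Real.mul_self_sqrt (hx_nonneg i)]; ring
    have e2 : ∀ i, (x i * Real.sqrt (x i)) ^ 2 = x i ^ 3 := by
      intro i
      rw [mul_pow, Real.sq_sqrt (hx_nonneg i)]; ring
    have e3 : ∀ i, Real.sqrt (x i) ^ 2 = x i := fun i => Real.sq_sqrt (hx_nonneg i)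
    simp only [e1, e2, e3] at h
    rwa [hx_sum, mul_one] at h
  -- termwise: x² - x³ ≤ x/4
  have hterm : ∑ i, (x i ^ 2 - x i ^ 3) ≤ 1 / 4 := by
    calc ∑ i, (x i ^ 2 - x i ^ 3) ≤ ∑ i, x i / 4 := by
          apply Finset.sum_le_sum
          intro i _
          nlinarith [sq_nonneg (x i - 1/2), hx_nonneg i]
      _ = 1 / 4 := by rw [← Finset.sum_div, hx_sum]
  have hsplit : ∑ i, (x i ^ 2 - x i ^ 3) = (∑ i, x i ^ 2) - ∑ i, x i ^ 3 :=
    Finset.sum_sub_distrib _ _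
  linarith
end

section
/- Let n ≥ 3 and let x ∈ Δ_n satisfy x_1 ≤ x_2 ≤ … ≤ x_n and x_1 + x_2 ≤ 1/2. Define y := (x_1 + x_2, x_3, …, x_n) ∈ Δ_{n−1} obtained by merging the two smallest coordinates, and write w(u) := s₂(u)² + s₂(u) − 2 s₃(u), where s_k(u) := Σ_i u_i^k. Then w(y) ≥ w(x). -/
/-!
Write `a ≤ b` for the two smallest coordinates and `s₂ = s₂(x)`. Merging them raises `s₂` by
`2ab` and `s₃` by `3ab(a + b)`, so `w(y) - w(x) = 2ab (2 s₂ + 2ab + 1 - 3(a + b))`. Every other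
coordinate is at least `b` and they sum to `1 - a - b`, whence `s₂ ≥ a² + b² + b(1 - a - b)`;
with `b ≤ 1/2 - a` the bracket is then at least `2(a - 1/2)² ≥ 0`.
-/

open Finset

lemma mul_sum_le_sum_sq_of_le {ι : Type*} (s : Finset ι) (t : ι → ℝ) {b : ℝ} (hb : 0 ≤ b)
    (ht : ∀ i ∈ s, b ≤ t i) : b * ∑ i ∈ s, t i ≤ ∑ i ∈ s, t i ^ 2 := by
  rw [mul_sum]
  refine sum_le_sum fun i hi => ?_
  nlinarith [ht i hi]

lemma merge_w_sub_eq (a b Q R : ℝ) :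
    (((a + b) ^ 2 + Q) ^ 2 + ((a + b) ^ 2 + Q) - 2 * ((a + b) ^ 3 + R)) -
      ((a ^ 2 + b ^ 2 + Q) ^ 2 + (a ^ 2 + b ^ 2 + Q) - 2 * (a ^ 3 + b ^ 3 + R)) =
      2 * a * b * (2 * (a ^ 2 + b ^ 2 + Q) + 2 * a * b + 1 - 3 * (a + b)) := by
  ring

lemma merge_factor_nonneg {a b Q : ℝ} (hsmall : a + b ≤ 1 / 2) (hQ : b * (1 - a - b) ≤ Q) :
    0 ≤ 2 * (a ^ 2 + b ^ 2 + Q) + 2 * a * b + 1 - 3 * (a + b) := by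
  nlinarith [sq_nonneg (2 * a - 1)]

theorem w_le_w_merge {ι : Type*} (s : Finset ι) (t : ι → ℝ) {a b : ℝ}
    (ha : 0 ≤ a) (hab : a ≤ b) (ht : ∀ i ∈ s, b ≤ t i)
    (hsum : a + b + ∑ i ∈ s, t i = 1) (hsmall : a + b ≤ 1 / 2) :
    (a ^ 2 + b ^ 2 + ∑ i ∈ s, t i ^ 2) ^ 2 + (a ^ 2 + b ^ 2 + ∑ i ∈ s, t i ^ 2) -
        2 * (a ^ 3 + b ^ 3 + ∑ i ∈ s, t i ^ 3) ≤
      ((a + b) ^ 2 + ∑ i ∈ s, t i ^ 2) ^ 2 + ((a + b) ^ 2 + ∑ i ∈ s, t i ^ 2) -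
        2 * ((a + b) ^ 3 + ∑ i ∈ s, t i ^ 3) := by
  have hb : 0 ≤ b := ha.trans hab
  have htail : b * (1 - a - b) ≤ ∑ i ∈ s, t i ^ 2 := by
    rw [show 1 - a - b = ∑ i ∈ s, t i by linarith]
    exact mul_sum_le_sum_sq_of_le s t hb ht
  rw [← sub_nonneg, merge_w_sub_eq]
  exact mul_nonneg (by positivity) (merge_factor_nonneg hsmall htail)

/-- merging the two smallest coordinates of a sorted point of the
probability simplex whose two smallest coordinates sum to at most `1/2` does not
decrease `w(u) = s₂(u)² + s₂(u) − 2 s₃(u)`. -/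
theorem merge_two_smallest_increases_w (n : ℕ) (hn : 3 ≤ n) (x : Fin n → ℝ)
    (hx_nonneg : ∀ i, 0 ≤ x i) (hx_sum : ∑ i, x i = 1)
    (hmono : Monotone x)
    (hsmall : x ⟨0, by omega⟩ + x ⟨1, by omega⟩ ≤ 1 / 2)
    (y : Fin (n - 1) → ℝ)
    (hy : ∀ j : Fin (n - 1), y j =
      if (j : ℕ) = 0 then x ⟨0, by omega⟩ + x ⟨1, by omega⟩
      else x ⟨(j : ℕ) + 1, by have := j.isLt; omega⟩) :
    (∑ i, x i ^ 2) ^ 2 + (∑ i, x i ^ 2) - 2 * ∑ i, x i ^ 3 ≤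
      (∑ j, y j ^ 2) ^ 2 + (∑ j, y j ^ 2) - 2 * ∑ j, y j ^ 3 := by
  obtain ⟨m, rfl⟩ : ∃ m, n = m + 3 := ⟨n - 3, by omega⟩
  have hx_split : ∀ k,
      ∑ i, x i ^ k = x 0 ^ k + x 1 ^ k + ∑ i : Fin (m + 1), x i.succ.succ ^ k := by
    intro k
    simp only [Fin.sum_univ_succ, Fin.succ_zero_eq_one, add_assoc]
  have hy_split : ∀ k,
      ∑ j, y j ^ k = (x 0 + x 1) ^ k + ∑ i : Fin (m + 1), x i.succ.succ ^ k := by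
    intro k
    change ∑ j : Fin (m + 2), y j ^ k = _
    rw [Fin.sum_univ_succ]
    simp only [hy, Fin.val_zero, Fin.val_succ]
    rfl
  have hx_sum' := hx_split 1
  simp only [pow_one, hx_sum] at hx_sum'
  rw [hx_split, hx_split, hy_split, hy_split]
  exact w_le_w_merge univ _ (hx_nonneg 0) (hmono (by simp))
    (fun i _ => hmono (by simp [Fin.le_def])) hx_sum'.symm hsmall
end
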